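/- Let f, g be Laurent polynomials in t over ℂ, and for integers m, n ≥ 0 define Ψ(f, m, g, n) = (m! n!/(m+n+1)!) · Res_{t=0}( f^{(n+1)}(t) · g^{(m)}(t) ), where Res_{t=0} denotes the coefficient of t^{-1}. Then Ψ is antisymmetric: Ψ(f, m, g, n) = −Ψ(g, n, f, m). -/

import Mathlib

open LaurentPolynomial

/-- The formal derivative of a Laurent polynomial. -/
noncomputable def lderiv (f : LaurentPolynomial ℂ) : LaurentPolynomial ℂ :=
  f.coeff.sum fun n a => (a * (n : ℂ)) • LaurentPolynomial.T (n - 1)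

/-- The residue at `t = 0`: the coefficient of `t⁻¹`. -/
noncomputable def lres (f : LaurentPolynomial ℂ) : ℂ := f.coeff (-1)

/-- The Kac–Peterson cocycle `Ψ(f, m, g, n)`. -/
noncomputable def KPcocycle (f : LaurentPolynomial ℂ) (m : ℕ) (g : LaurentPolynomial ℂ)
    (n : ℕ) : ℂ :=
  ((m.factorial * n.factorial : ℂ) / ((m + n + 1).factorial : ℂ)) *
    lres (lderiv^[n + 1] f * lderiv^[m] g)

/-!
`lderiv` is a derivation and the residue of a derivative vanishes, so residues obey integration
by parts, `Res (f' g) = - Res (f g')`. One such step turns `Res (f^(n+1) g^(m))` into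
`- Res (g^(m+1) f^(n))`, and the prefactor `m! n! / (m+n+1)!` is symmetric in `m` and `n`.
-/

lemma lderiv_add (f g : LaurentPolynomial ℂ) : lderiv (f + g) = lderiv f + lderiv g := by
  unfold lderiv
  rw [AddMonoidAlgebra.coeff_add, Finsupp.sum_add_index] <;> intros <;> simp [add_mul, add_smul]

lemma lderiv_C_mul_T (c : ℂ) (j : ℤ) : lderiv (C c * T j) = C (c * j) * T (j - 1) := by
  rw [← single_eq_C_mul_T, lderiv, AddMonoidAlgebra.coeff_single, Finsupp.sum_single_index]
  · rw [smul_eq_C_mul]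
  · simp

lemma lderiv_mul (f g : LaurentPolynomial ℂ) :
    lderiv (f * g) = lderiv f * g + f * lderiv g := by
  induction f using LaurentPolynomial.induction_on' with
  | add p q hp hq => rw [add_mul, lderiv_add, lderiv_add, hp, hq]; ring
  | C_mul_T j c =>
    induction g using LaurentPolynomial.induction_on' with
    | add p q hp hq => rw [mul_add, lderiv_add, lderiv_add, hp, hq]; ring
    | C_mul_T k d =>
      have hT : ∀ i : ℤ, (T (i - 1) : LaurentPolynomial ℂ) = T i * T (-1) := fun i => by
        rw [sub_eq_add_neg, T_add]
      have hprod : C c * T j * (C d * T k) = C (c * d) * T (j + k) := by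
        rw [T_add, map_mul]; ring
      rw [hprod, lderiv_C_mul_T, lderiv_C_mul_T, lderiv_C_mul_T, hT, hT, hT, T_add]
      push_cast
      simp only [map_mul, map_add, map_intCast]
      ring

lemma lres_add (f g : LaurentPolynomial ℂ) : lres (f + g) = lres f + lres g := by
  rw [lres, lres, lres, AddMonoidAlgebra.coeff_add, Finsupp.add_apply]

lemma lres_C_mul_T (c : ℂ) (s : ℤ) : lres (C c * T s) = if s = -1 then c else 0 := by
  rw [← single_eq_C_mul_T, lres, AddMonoidAlgebra.coeff_single, Finsupp.single_apply]

lemma lres_lderiv (f : LaurentPolynomial ℂ) : lres (lderiv f) = 0 := by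
  induction f using LaurentPolynomial.induction_on' with
  | add p q hp hq => rw [lderiv_add, lres_add, hp, hq, add_zero]
  | C_mul_T j c =>
    rw [lderiv_C_mul_T, lres_C_mul_T]
    split_ifs with h
    · obtain rfl : j = 0 := by omega
      simp
    · rfl

lemma lres_lderiv_mul (f g : LaurentPolynomial ℂ) :
    lres (lderiv f * g) = - lres (f * lderiv g) := by
  have h := lres_lderiv (f * g)
  rw [lderiv_mul, lres_add] at h
  linear_combination h

/-- The Kac–Peterson cocycle is antisymmetric. -/
theorem KPcocycle_antisymm (f g : LaurentPolynomial ℂ) (m n : ℕ) :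
    KPcocycle f m g n = - KPcocycle g n f m := by
  have hparts : lres (lderiv^[n + 1] f * lderiv^[m] g)
      = - lres (lderiv^[m + 1] g * lderiv^[n] f) := by
    rw [Function.iterate_succ_apply', lres_lderiv_mul, Function.iterate_succ_apply' lderiv m g,
      mul_comm]
  rw [KPcocycle, KPcocycle, hparts, Nat.add_comm m n]
  ring
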